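/- For every fixed d ≥ 1, sup over r ∈ [1,∞) of (2r)^{−d}((r+1)^{r+1}/(r−1)^{r−1})^{d/2} equals (e/2)^d, attained in the limit r → ∞. -/

import Mathlib

/-!
Write `h x = (1 + x) log (1 + x) - (1 - x) log (1 - x)` (`oddMulLog`). For `r > 1`,
`log (lbFun d r) = d (r h (1/r) / 2 - log 2)`. Since `h 0 = 0` and `h' x = 2 + log (1 - x²) ≤ 2`,
the mean value theorem gives `r h (1/r) ≤ 2`, while `h' 0 = 2` gives `r h (1/r) → 2`.
Hence `lbFun d r ≤ exp (d (1 - log 2)) = (e/2)^d`, with equality in the limit `r → ∞`.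
-/

noncomputable section
open Filter

/-- The lower-bound function `r ↦ (2r)^{-d} ((r+1)^{r+1}/(r-1)^{r-1})^{d/2}`. -/
def lbFun (d : ℕ) (r : ℝ) : ℝ :=
  (2 * r) ^ (-(d : ℝ)) * (((r + 1) ^ (r + 1) / (r - 1) ^ (r - 1)) ^ ((d : ℝ) / 2))

open Real Set Topology

def oddMulLog (x : ℝ) : ℝ := negMulLog (1 - x) - negMulLog (1 + x)

@[simp] lemma oddMulLog_zero : oddMulLog 0 = 0 := by simp [oddMulLog]

lemma hasDerivAt_oddMulLog {x : ℝ} (hx : x ∈ Ioo (-1 : ℝ) 1) :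
    HasDerivAt oddMulLog (2 + log (1 + x) + log (1 - x)) x := by
  have h₁ : HasDerivAt (fun y => negMulLog (1 - y)) ((-log (1 - x) - 1) * -1) x :=
    (hasDerivAt_negMulLog (by linarith [hx.2])).comp x ((hasDerivAt_id' x).const_sub 1)
  have h₂ : HasDerivAt (fun y => negMulLog (1 + y)) ((-log (1 + x) - 1) * 1) x :=
    (hasDerivAt_negMulLog (by linarith [hx.1])).comp x ((hasDerivAt_id' x).const_add 1)
  exact (h₁.sub h₂).congr_deriv (by ring)

lemma oddMulLog_le {x : ℝ} (hx₀ : 0 ≤ x) (hx₁ : x < 1) : oddMulLog x ≤ 2 * x := by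
  have hdiff : ∀ y ∈ Ioo (-1 : ℝ) 1, DifferentiableAt ℝ oddMulLog y := fun y hy =>
    (hasDerivAt_oddMulLog hy).differentiableAt
  have hderiv : ∀ y ∈ interior (Ioo (-1 : ℝ) 1), deriv oddMulLog y ≤ 2 := by
    intro y hy
    rw [interior_Ioo] at hy
    rw [(hasDerivAt_oddMulLog hy).deriv]
    linarith [log_le_sub_one_of_pos (show 0 < 1 + y by linarith [hy.1]),
      log_le_sub_one_of_pos (show 0 < 1 - y by linarith [hy.2])]
  have := (convex_Ioo (-1 : ℝ) 1).image_sub_le_mul_sub_of_deriv_le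
    (fun y hy => (hdiff y hy).continuousAt.continuousWithinAt)
    (fun y hy => (hdiff y (interior_subset hy)).differentiableWithinAt) hderiv
    0 (by norm_num) x ⟨by linarith, hx₁⟩ hx₀
  simpa using this

lemma tendsto_mul_oddMulLog_inv : Tendsto (fun r : ℝ => r * oddMulLog r⁻¹) atTop (𝓝 2) := by
  have hslope := (hasDerivAt_oddMulLog (x := 0) (by norm_num)).tendsto_slope_zero_right
  simp only [zero_add, oddMulLog_zero, sub_zero, smul_eq_mul, log_one, add_zero] at hslope
  refine (hslope.comp tendsto_inv_atTop_nhdsGT_zero).congr fun r => ?_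
  rw [Function.comp_apply, inv_inv]

lemma mul_oddMulLog_inv {r : ℝ} (hr : 1 < r) :
    r * oddMulLog r⁻¹ = (r + 1) * log (r + 1) - (r - 1) * log (r - 1) - 2 * log r := by
  have hr₀ : r ≠ 0 := by positivity
  rw [oddMulLog, negMulLog, negMulLog, show 1 - r⁻¹ = (r - 1) / r by field_simp,
    show 1 + r⁻¹ = (r + 1) / r by field_simp, log_div (by linarith) hr₀,
    log_div (by linarith) hr₀]
  field_simp
  ring

lemma lbFun_eq_exp (d : ℕ) {r : ℝ} (hr : 1 < r) :
    lbFun d r = exp (d * (r * oddMulLog r⁻¹ / 2 - log 2)) := by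
  rw [lbFun, rpow_def_of_pos (by linarith : 0 < 2 * r),
    rpow_def_of_pos (by linarith : 0 < r + 1), rpow_def_of_pos (by linarith : 0 < r - 1),
    ← exp_sub, rpow_def_of_pos (exp_pos _), log_exp, ← exp_add,
    mul_oddMulLog_inv hr, log_mul two_ne_zero (by positivity)]
  ring_nf

-- The factor `(1 - 1) ^ (1 - 1)` is `0 ^ 0 = 1` for `Real.rpow`.
lemma lbFun_one (d : ℕ) : lbFun d 1 = 1 := by
  have h4 : ((1 : ℝ) + 1) ^ ((1 : ℝ) + 1) = 2 ^ (2 : ℝ) := by norm_num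
  rw [lbFun, h4, sub_self, rpow_zero, div_one, ← rpow_mul zero_le_two,
    mul_div_cancel₀ _ two_ne_zero, mul_one, rpow_neg zero_le_two,
    inv_mul_cancel₀ (by positivity)]

lemma exp_one_div_two_rpow (d : ℕ) : (exp 1 / 2) ^ (d : ℝ) = exp (d * (1 - log 2)) := by
  rw [rpow_def_of_pos (by positivity), log_div (exp_ne_zero 1) two_ne_zero, log_exp, mul_comm]

lemma lbFun_le (d : ℕ) {r : ℝ} (hr : 1 ≤ r) : lbFun d r ≤ (exp 1 / 2) ^ (d : ℝ) := by
  rcases hr.eq_or_lt with rfl | hr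
  · rw [lbFun_one, exp_one_div_two_rpow]
    exact one_le_exp (mul_nonneg d.cast_nonneg (by linarith [log_two_lt_d9]))
  · have hbound : r * oddMulLog r⁻¹ ≤ 2 := by
      have := oddMulLog_le (inv_nonneg.2 (by linarith : (0:ℝ) ≤ r)) (inv_lt_one_of_one_lt₀ hr)
      calc r * oddMulLog r⁻¹ ≤ r * (2 * r⁻¹) := by gcongr
        _ = 2 := by field_simp
    rw [lbFun_eq_exp d hr, exp_one_div_two_rpow, exp_le_exp]
    gcongr
    linarith

lemma tendsto_lbFun (d : ℕ) : Tendsto (lbFun d) atTop (𝓝 ((exp 1 / 2) ^ (d : ℝ))) := by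
  have hexponent : Tendsto (fun r : ℝ => d * (r * oddMulLog r⁻¹ / 2 - log 2)) atTop
      (𝓝 (d * (1 - log 2))) := by
    convert ((tendsto_mul_oddMulLog_inv.div_const 2).sub_const (log 2)).const_mul (d : ℝ)
      using 3
    norm_num
  rw [exp_one_div_two_rpow]
  exact ((continuous_exp.tendsto _).comp hexponent).congr'
    ((eventually_gt_atTop 1).mono fun r hr => (lbFun_eq_exp d hr).symm)

lemma isLUB_image_Ici_of_tendsto {α β : Type*} [SemilatticeSup α]
    [LinearOrder β] [TopologicalSpace β] [OrderClosedTopology β] {f : α → β} {a : α} {b : β}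
    (hle : ∀ x, a ≤ x → f x ≤ b) (hf : Tendsto f atTop (𝓝 b)) : IsLUB (f '' Ici a) b := by
  have : Nonempty α := ⟨a⟩
  exact ⟨forall_mem_image.2 hle, fun _ hc =>
    le_of_tendsto hf ((eventually_ge_atTop a).mono fun _ hx => hc (mem_image_of_mem f hx))⟩

theorem stmt14_general (d : ℕ) :
    sSup (lbFun d '' Set.Ici (1 : ℝ)) = (Real.exp 1 / 2) ^ (d : ℝ) ∧
      Tendsto (lbFun d) atTop (nhds ((Real.exp 1 / 2) ^ (d : ℝ))) :=
  ⟨(isLUB_image_Ici_of_tendsto (fun _ => lbFun_le d) (tendsto_lbFun d)).csSup_eq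
    (nonempty_Ici.image _), tendsto_lbFun d⟩

/-- The supremum over `r ∈ [1,∞)` of the lower-bound function equals `(e/2)^d`,
attained in the limit `r → ∞`. -/
theorem stmt14 (d : ℕ) (hd : 1 ≤ d) :
    sSup (lbFun d '' Set.Ici (1 : ℝ)) = (Real.exp 1 / 2) ^ (d : ℝ) ∧
      Tendsto (lbFun d) atTop (nhds ((Real.exp 1 / 2) ^ (d : ℝ))) :=
  stmt14_general d
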